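/- arXiv:1507.07535 — 3 statements merged into one kernel-verified Lean document; each statement's English description precedes it below -/
import Mathlib

section
/- Assume moreover that H is monotone increasing. Then for all x₁ ≤ x₂, ℙ({ω : X₁(ω) ≤ x₁ and X₂(ω) ≤ x₂}) = G(x₁)^{α₁+α₃} · G(x₂)^{α₂}, and for all x₂ ≤ x₁, ℙ({ω : X₁(ω) ≤ x₁ and X₂(ω) ≤ x₂}) = G(x₁)^{α₁} · G(x₂)^{α₂+α₃}. -/
open MeasureTheory ProbabilityTheory Real

/-! The event `{max U₀ U₂ ≤ x₁, max U₁ U₂ ≤ x₂}` is `{U₀ ≤ x₁} ∩ {U₁ ≤ x₂} ∩ {U₂ ≤ min x₁ x₂}`,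
so by independence the joint cdf is `G(x₁)^α₀ · G(x₂)^α₁ · G(min x₁ x₂)^α₂`. Since `G ≥ 0`,
the two powers of `G(min x₁ x₂)` merge by `G^a · G^c = G^(a + c)`. -/

lemma max_le_and_max_le_iff {β : Type*} [LinearOrder β] {a b c x₁ x₂ : β} :
    max a c ≤ x₁ ∧ max b c ≤ x₂ ↔ a ≤ x₁ ∧ b ≤ x₂ ∧ c ≤ min x₁ x₂ := by
  simp only [max_le_iff, le_min_iff]
  tauto

lemma ProbabilityTheory.iIndepFun.measure_max_le_and_max_le
    {Ω β : Type*} [MeasurableSpace Ω] {P : Measure Ω}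
    [LinearOrder β] [TopologicalSpace β] [OrderClosedTopology β]
    [MeasurableSpace β] [OpensMeasurableSpace β]
    {U : Fin 3 → Ω → β} (hU : iIndepFun U P) (x₁ x₂ : β) :
    P {ω | max (U 0 ω) (U 2 ω) ≤ x₁ ∧ max (U 1 ω) (U 2 ω) ≤ x₂} =
      P {ω | U 0 ω ≤ x₁} * P {ω | U 1 ω ≤ x₂} * P {ω | U 2 ω ≤ min x₁ x₂} := by
  set t : Fin 3 → β := ![x₁, x₂, min x₁ x₂]
  have hevent : {ω | max (U 0 ω) (U 2 ω) ≤ x₁ ∧ max (U 1 ω) (U 2 ω) ≤ x₂} =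
      ⋂ i, U i ⁻¹' Set.Iic (t i) := by
    ext ω
    simp only [Set.mem_ofPred_eq, max_le_and_max_le_iff, Set.mem_iInter, Set.mem_preimage,
      Set.mem_Iic, Fin.forall_fin_succ, IsEmpty.forall_iff, and_true]
    rfl
  rw [hevent, hU.meas_iInter fun i => ⟨Set.Iic (t i), measurableSet_Iic, rfl⟩,
    Fin.prod_univ_three]
  rfl

lemma one_sub_exp_neg_mul_nonneg {lam h : ℝ} (hlam : 0 ≤ lam) (hh : 0 ≤ h) :
    0 ≤ 1 - exp (-lam * h) := by
  have : exp (-lam * h) ≤ 1 := exp_le_one_iff.2 (by nlinarith)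
  linarith

lemma ENNReal.ofReal_rpow_add {x y z : ℝ} (hx : 0 ≤ x) (h : y + z ≠ 0) :
    ENNReal.ofReal (x ^ (y + z)) = ENNReal.ofReal (x ^ y) * ENNReal.ofReal (x ^ z) := by
  rw [rpow_add' hx h, ENNReal.ofReal_mul (rpow_nonneg hx y)]

theorem beew_joint_cdf_cases_general
    {Ω : Type*} [MeasurableSpace Ω] (P : Measure Ω)
    (lam : ℝ) (hlam : 0 < lam)
    (α : Fin 3 → ℝ) (hα : ∀ i, 0 < α i)
    (H : ℝ → ℝ) (hH : ∀ x, 0 ≤ H x)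
    (U : Fin 3 → Ω → ℝ)
    (hindep : iIndepFun U P)
    (hcdf : ∀ i x, P {ω | U i ω ≤ x} =
      ENNReal.ofReal ((1 - Real.exp (-lam * H x)) ^ (α i))) :
    (∀ x₁ x₂ : ℝ, x₁ ≤ x₂ →
      P {ω | max (U 0 ω) (U 2 ω) ≤ x₁ ∧ max (U 1 ω) (U 2 ω) ≤ x₂} =
        ENNReal.ofReal ((1 - Real.exp (-lam * H x₁)) ^ (α 0 + α 2) *
          (1 - Real.exp (-lam * H x₂)) ^ α 1)) ∧
    (∀ x₁ x₂ : ℝ, x₂ ≤ x₁ →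
      P {ω | max (U 0 ω) (U 2 ω) ≤ x₁ ∧ max (U 1 ω) (U 2 ω) ≤ x₂} =
        ENNReal.ofReal ((1 - Real.exp (-lam * H x₁)) ^ α 0 *
          (1 - Real.exp (-lam * H x₂)) ^ (α 1 + α 2))) := by
  have hG x : 0 ≤ 1 - exp (-lam * H x) := one_sub_exp_neg_mul_nonneg hlam.le (hH x)
  have hα_add i j : α i + α j ≠ 0 := (add_pos (hα i) (hα j)).ne'
  refine ⟨fun x₁ x₂ h => ?_, fun x₁ x₂ h => ?_⟩
  · rw [hindep.measure_max_le_and_max_le, hcdf, hcdf, hcdf, min_eq_left h,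
      ENNReal.ofReal_mul (rpow_nonneg (hG x₁) _), ENNReal.ofReal_rpow_add (hG x₁) (hα_add 0 2)]
    ring
  · rw [hindep.measure_max_le_and_max_le, hcdf, hcdf, hcdf, min_eq_right h,
      ENNReal.ofReal_mul (rpow_nonneg (hG x₁) _), ENNReal.ofReal_rpow_add (hG x₂) (hα_add 1 2)]
    ring

/-- With `H` monotone increasing, for `x₁ ≤ x₂` the joint cdf is
`G(x₁)^(α₁+α₃) · G(x₂)^α₂`, and for `x₂ ≤ x₁` it is `G(x₁)^α₁ · G(x₂)^(α₂+α₃)`. -/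
theorem beew_joint_cdf_cases
    {Ω : Type*} [MeasurableSpace Ω] (P : Measure Ω) [IsProbabilityMeasure P]
    (lam : ℝ) (hlam : 0 < lam)
    (α : Fin 3 → ℝ) (hα : ∀ i, 0 < α i)
    (H : ℝ → ℝ) (hH : ∀ x, 0 ≤ H x) (hHmono : Monotone H)
    (U : Fin 3 → Ω → ℝ) (hUmeas : ∀ i, Measurable (U i))
    (hindep : iIndepFun U P)
    (hcdf : ∀ i x, P {ω | U i ω ≤ x} =
      ENNReal.ofReal ((1 - Real.exp (-lam * H x)) ^ (α i))) :
    (∀ x₁ x₂ : ℝ, x₁ ≤ x₂ →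
      P {ω | max (U 0 ω) (U 2 ω) ≤ x₁ ∧ max (U 1 ω) (U 2 ω) ≤ x₂} =
        ENNReal.ofReal ((1 - Real.exp (-lam * H x₁)) ^ (α 0 + α 2) *
          (1 - Real.exp (-lam * H x₂)) ^ α 1)) ∧
    (∀ x₁ x₂ : ℝ, x₂ ≤ x₁ →
      P {ω | max (U 0 ω) (U 2 ω) ≤ x₁ ∧ max (U 1 ω) (U 2 ω) ≤ x₂} =
        ENNReal.ofReal ((1 - Real.exp (-lam * H x₁)) ^ α 0 *
          (1 - Real.exp (-lam * H x₂)) ^ (α 1 + α 2))) :=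
  beew_joint_cdf_cases_general P lam hlam α hα H hH U hindep hcdf
end

section
/- Let 0 < x₂ and assume h(x₂) ≠ 0, H(x₁) > 0 and H(x₂) > 0. Writing f_EEW(x; α) = α·λ·h(x)·exp(−λ·H(x))·(1 − exp(−λ·H(x)))^{α−1} for the EEW density, the conditional density of X₁ given X₂ = x₂ satisfies: (i) if 0 < x₁ < x₂ then f₁(x₁,x₂)/f_EEW(x₂; α₂+α₃) = (α₁+α₃)·α₂·λ·h(x₁)·(1 − exp(−λ·H(x₁)))^{α₁+α₃−1}·exp(−λ·H(x₁)) / ((α₂+α₃)·(1 − exp(−λ·H(x₂)))^{α₃}), where f₁(x₁,x₂) = f_EEW(x₁; α₁+α₃)·f_EEW(x₂; α₂); and (ii) if 0 < x₂ < x₁ then f₂(x₁,x₂)/f_EEW(x₂; α₂+α₃) = α₁·λ·h(x₁)·(1 − exp(−λ·H(x₁)))^{α₁−1}·exp(−λ·H(x₁)), where f₂(x₁,x₂) = f_EEW(x₁; α₁)·f_EEW(x₂; α₂+α₃). -/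
open Real

noncomputable def eewDensity (lam : ℝ) (H h : ℝ → ℝ) (x α : ℝ) : ℝ :=
  α * lam * h x * exp (-lam * H x) * (1 - exp (-lam * H x)) ^ (α - 1)

lemma one_sub_exp_neg_mul_pos {lam t : ℝ} (hlam : 0 < lam) (ht : 0 < t) :
    0 < 1 - exp (-lam * t) := by
  have hneg : -lam * t < 0 := by nlinarith
  linarith [exp_lt_one_iff.2 hneg]

section eewDensity

variable {lam : ℝ} {H h : ℝ → ℝ} {x α β : ℝ}

lemma eewDensity_ne_zero (hα : α ≠ 0) (hlam : lam ≠ 0) (hh : h x ≠ 0)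
    (hu : 0 < 1 - exp (-lam * H x)) : eewDensity lam H h x α ≠ 0 := by
  unfold eewDensity
  have := (rpow_pos_of_pos hu (α - 1)).ne'
  have := exp_ne_zero (-lam * H x)
  positivity

lemma eewDensity_div_eewDensity_add (hlam : lam ≠ 0) (hh : h x ≠ 0)
    (hu : 0 < 1 - exp (-lam * H x)) (hαβ : α + β ≠ 0) :
    eewDensity lam H h x α / eewDensity lam H h x (α + β) =
      α / ((α + β) * (1 - exp (-lam * H x)) ^ β) := by
  have hsplit : (1 - exp (-lam * H x)) ^ (α + β - 1) =
      (1 - exp (-lam * H x)) ^ (α - 1) * (1 - exp (-lam * H x)) ^ β := by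
    rw [← rpow_add hu]; ring_nf
  have hβ := (rpow_pos_of_pos hu β).ne'
  rw [div_eq_div_iff (eewDensity_ne_zero hαβ hlam hh hu) (mul_ne_zero hαβ hβ)]
  unfold eewDensity
  rw [hsplit]
  ring

end eewDensity

theorem beew_conditional_density_general
    (lam α₁ α₂ α₃ : ℝ) (hlam : 0 < lam)
    (hα₂ : 0 < α₂) (hα₃ : 0 < α₃)
    (H h : ℝ → ℝ)
    (fEEW : ℝ → ℝ → ℝ)
    (hf : ∀ x α, fEEW x α = α * lam * h x * Real.exp (-lam * H x) *
      (1 - Real.exp (-lam * H x)) ^ (α - 1))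
    (x₁ x₂ : ℝ) (hh₂ : h x₂ ≠ 0)
    (hH₂ : 0 < H x₂) :
    (0 < x₁ → x₁ < x₂ →
      fEEW x₁ (α₁ + α₃) * fEEW x₂ α₂ / fEEW x₂ (α₂ + α₃) =
        (α₁ + α₃) * α₂ * lam * h x₁ *
            (1 - Real.exp (-lam * H x₁)) ^ (α₁ + α₃ - 1) *
            Real.exp (-lam * H x₁) /
          ((α₂ + α₃) * (1 - Real.exp (-lam * H x₂)) ^ α₃)) ∧
    (x₂ < x₁ →
      fEEW x₁ α₁ * fEEW x₂ (α₂ + α₃) / fEEW x₂ (α₂ + α₃) =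
        α₁ * lam * h x₁ * (1 - Real.exp (-lam * H x₁)) ^ (α₁ - 1) *
          Real.exp (-lam * H x₁)) := by
  obtain rfl : fEEW = eewDensity lam H h := funext₂ hf
  have hu₂ := one_sub_exp_neg_mul_pos hlam hH₂
  have hα : α₂ + α₃ ≠ 0 := by positivity
  refine ⟨fun _ _ => ?_, fun _ => ?_⟩
  · rw [mul_div_assoc, eewDensity_div_eewDensity_add hlam.ne' hh₂ hu₂ hα]
    unfold eewDensity
    ring
  · rw [mul_div_cancel_right₀ _ (eewDensity_ne_zero hα hlam.ne' hh₂ hu₂)]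
    unfold eewDensity
    ring

/-- Conditional densities of `X₁` given `X₂ = x₂` for the BEEW
distribution, below and above the diagonal. Here
`f_EEW(x; α) = α·λ·h(x)·exp(−λH(x))·(1 − exp(−λH(x)))^(α−1)`. -/
theorem beew_conditional_density
    (lam α₁ α₂ α₃ : ℝ) (hlam : 0 < lam)
    (hα₁ : 0 < α₁) (hα₂ : 0 < α₂) (hα₃ : 0 < α₃)
    (H h : ℝ → ℝ) (hH : ∀ x, 0 ≤ H x)
    (fEEW : ℝ → ℝ → ℝ)
    (hf : ∀ x α, fEEW x α = α * lam * h x * Real.exp (-lam * H x) *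
      (1 - Real.exp (-lam * H x)) ^ (α - 1))
    (x₁ x₂ : ℝ) (hx₂ : 0 < x₂) (hh₂ : h x₂ ≠ 0)
    (hH₁ : 0 < H x₁) (hH₂ : 0 < H x₂) :
    (0 < x₁ → x₁ < x₂ →
      fEEW x₁ (α₁ + α₃) * fEEW x₂ α₂ / fEEW x₂ (α₂ + α₃) =
        (α₁ + α₃) * α₂ * lam * h x₁ *
            (1 - Real.exp (-lam * H x₁)) ^ (α₁ + α₃ - 1) *
            Real.exp (-lam * H x₁) /
          ((α₂ + α₃) * (1 - Real.exp (-lam * H x₂)) ^ α₃)) ∧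
    (x₂ < x₁ →
      fEEW x₁ α₁ * fEEW x₂ (α₂ + α₃) / fEEW x₂ (α₂ + α₃) =
        α₁ * lam * h x₁ * (1 - Real.exp (-lam * H x₁)) ^ (α₁ - 1) *
          Real.exp (-lam * H x₁)) :=
  beew_conditional_density_general lam α₁ α₂ α₃ hlam hα₂ hα₃ H h fEEW hf x₁ x₂ hh₂ hH₂
end

section
/- ℙ(U₃ < U₁) = α₁/(α₁+α₃). -/
open MeasureTheory ProbabilityTheory Real Set Filter

/-!
Conditioning on `U₁`, independence gives `ℙ(U₃ < U₁) = 𝔼[G₃(U₁)]`, where `Gᵢ` is the cdf of `Uᵢ`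
(no atoms, so `<` and `≤` agree). Both cdfs are powers of the same continuous function, so
`G₃ = G₁ ^ (α₃ / α₁)`. By the probability integral transform `G₁(U₁)` is uniform on `[0, 1]`, hence
`ℙ(U₃ < U₁) = ∫₀¹ v ^ (α₃ / α₁) dv = α₁ / (α₁ + α₃)`.
-/

namespace ProbabilityTheory

variable {μ : Measure ℝ} [IsProbabilityMeasure μ]

theorem nullSingletonClass_of_continuous_cdf (hμ : Continuous (cdf μ)) : NullSingletonClass μ where
  measure_singleton a := by
    rw [← measure_cdf μ, StieltjesFunction.measure_singleton,
      hμ.continuousWithinAt.leftLim_eq, sub_self, ENNReal.ofReal_zero]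

theorem measure_cdf_preimage_Iic_of_continuous (hμ : Continuous (cdf μ)) {v : ℝ} (hv0 : 0 ≤ v)
    (hv1 : v < 1) : μ (cdf μ ⁻¹' Iic v) = ENNReal.ofReal v := by
  set S := cdf μ ⁻¹' Iic v
  rcases S.eq_empty_or_nonempty with hS | hS
  · have hv : v ≤ 0 := ge_of_tendsto (tendsto_cdf_atBot μ) <| Eventually.of_forall fun x ↦
      le_of_lt <| not_le.1 fun hx ↦ (hS ▸ hx : x ∈ (∅ : Set ℝ))
    rw [hS, measure_empty, le_antisymm hv hv0, ENNReal.ofReal_zero]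
  have hbdd : BddAbove S := by
    obtain ⟨b, hb⟩ := ((tendsto_cdf_atTop μ).eventually (lt_mem_nhds hv1)).exists
    exact ⟨b, fun x hx ↦ le_of_not_gt fun hbx ↦ (hb.trans_le (monotone_cdf μ hbx.le)).not_ge hx⟩
  set a := sSup S
  have ha : cdf μ a ≤ v := (isClosed_Iic.preimage hμ).csSup_mem hS hbdd
  have hS_eq : S = Iic a :=
    Subset.antisymm (fun x hx ↦ le_csSup hbdd hx) fun x hx ↦ (monotone_cdf μ hx).trans ha
  -- otherwise the open set `{x | cdf μ x < v}` would be a neighbourhood of `a` inside `Iic a`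
  have hva : v ≤ cdf μ a := by
    by_contra! h
    have : a ∈ interior (Iic a) :=
      interior_maximal (fun x (hx : cdf μ x < v) ↦ hS_eq.le (show cdf μ x ≤ v from hx.le))
        (isOpen_lt hμ continuous_const) h
    rw [interior_Iic] at this
    exact lt_irrefl a this
  rw [hS_eq, ← ofReal_cdf, le_antisymm ha hva]

theorem map_cdf_eq_of_continuous (hμ : Continuous (cdf μ)) :
    μ.map (cdf μ) = volume.restrict (Icc 0 1) := by
  refine Measure.ext_of_Iic _ _ fun v ↦ ?_
  have hIcc : Iic v ∩ Icc 0 1 = Icc 0 (min v 1) := by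
    ext x; simp only [mem_inter_iff, mem_Iic, mem_Icc, le_min_iff]; tauto
  rw [Measure.map_apply (monotone_cdf μ).measurable measurableSet_Iic,
    Measure.restrict_apply measurableSet_Iic, hIcc, Real.volume_Icc, sub_zero]
  rcases lt_or_ge v 0 with hv0 | hv0
  · have hempty : cdf μ ⁻¹' Iic v = ∅ :=
      eq_empty_of_forall_notMem fun x hx ↦ (hv0.trans_le (cdf_nonneg μ x)).not_ge hx
    rw [hempty, measure_empty, ENNReal.ofReal_of_nonpos (min_le_of_left_le hv0.le)]
  rcases lt_or_ge v 1 with hv1 | hv1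
  · rw [min_eq_left hv1.le, measure_cdf_preimage_Iic_of_continuous hμ hv0 hv1]
  · have huniv : cdf μ ⁻¹' Iic v = univ :=
      eq_univ_of_forall fun x ↦ (cdf_le_one μ x).trans hv1
    rw [huniv, measure_univ, min_eq_right hv1, ENNReal.ofReal_one]

theorem lintegral_ofReal_cdf_rpow (hμ : Continuous (cdf μ)) {p : ℝ} (hp : -1 < p) :
    ∫⁻ x, ENNReal.ofReal (cdf μ x ^ p) ∂μ = ENNReal.ofReal (1 / (p + 1)) := by
  have hmeas : Measurable fun v : ℝ ↦ ENNReal.ofReal (v ^ p) := by fun_prop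
  rw [← lintegral_map hmeas (monotone_cdf μ).measurable, map_cdf_eq_of_continuous hμ,
    ← ofReal_integral_eq_lintegral_ofReal, integral_Icc_eq_integral_Ioc,
    ← intervalIntegral.integral_of_le zero_le_one, integral_rpow (Or.inl hp)]
  · simp [zero_rpow (by linarith : p + 1 ≠ 0)]
  · exact (integrableOn_Icc_iff_integrableOn_Ioc).2
      (intervalIntegral.intervalIntegrable_rpow' hp).1
  · exact (ae_restrict_iff' measurableSet_Icc).2 (ae_of_all _ fun v hv ↦ rpow_nonneg hv.1 p)

theorem IndepFun.measure_lt_eq_lintegral {Ω : Type*} [MeasurableSpace Ω] {P : Measure Ω}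
    [IsFiniteMeasure P] {X Y : Ω → ℝ} (hX : Measurable X) (hY : Measurable Y)
    (hXY : IndepFun X Y P) :
    P {ω | Y ω < X ω} = ∫⁻ x, P.map Y (Iio x) ∂(P.map X) := by
  have hlt : MeasurableSet {p : ℝ × ℝ | p.2 < p.1} := measurableSet_lt measurable_snd measurable_fst
  change P ((fun ω ↦ (X ω, Y ω)) ⁻¹' {p | p.2 < p.1}) = _
  rw [← Measure.map_apply (hX.prodMk hY) hlt, (indepFun_iff_map_prod_eq_prod_map_map
    hX.aemeasurable hY.aemeasurable).1 hXY, Measure.prod_apply hlt]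
  rfl

theorem cdf_map_eq_of_measure_le {Ω : Type*} [MeasurableSpace Ω] {P : Measure Ω}
    [IsProbabilityMeasure P] {X : Ω → ℝ} (hX : Measurable X) {G : ℝ → ℝ} (hG : ∀ x, 0 ≤ G x)
    (hXG : ∀ x, P {ω | X ω ≤ x} = ENNReal.ofReal (G x)) : cdf (P.map X) = G := by
  have := Measure.isProbabilityMeasure_map (μ := P) hX.aemeasurable
  ext x
  rw [cdf_eq_real, measureReal_def, Measure.map_apply hX measurableSet_Iic]
  exact (congrArg ENNReal.toReal (hXG x)).trans (ENNReal.toReal_ofReal (hG x))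

end ProbabilityTheory

/-- For independent `U₁ ~ EEW(α₁, λ, H)` and `U₃ ~ EEW(α₃, λ, H)`,
`ℙ(U₃ < U₁) = α₁/(α₁+α₃)`. -/
theorem eew_comparison_probability
    {Ω : Type*} [MeasurableSpace Ω] (P : Measure Ω) [IsProbabilityMeasure P]
    (lam α₁ α₃ : ℝ) (hlam : 0 < lam) (hα₁ : 0 < α₁) (hα₃ : 0 < α₃)
    (H : ℝ → ℝ) (hH : ∀ x, 0 ≤ H x) (hHcont : Continuous H)
    (U₁ U₃ : Ω → ℝ) (hU₁ : Measurable U₁) (hU₃ : Measurable U₃)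
    (hindep : IndepFun U₁ U₃ P)
    (hcdf₁ : ∀ x, P {ω | U₁ ω ≤ x} =
      ENNReal.ofReal ((1 - Real.exp (-lam * H x)) ^ α₁))
    (hcdf₃ : ∀ x, P {ω | U₃ ω ≤ x} =
      ENNReal.ofReal ((1 - Real.exp (-lam * H x)) ^ α₃)) :
    P {ω | U₃ ω < U₁ ω} = ENNReal.ofReal (α₁ / (α₁ + α₃)) := by
  set F : ℝ → ℝ := fun x ↦ 1 - Real.exp (-lam * H x)
  have hF0 (x : ℝ) : 0 ≤ F x :=
    sub_nonneg.2 (Real.exp_le_one_iff.2 (by nlinarith [hH x]))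
  have hFc : Continuous F := by fun_prop
  have hcdfU₁ := cdf_map_eq_of_measure_le hU₁ (fun x ↦ rpow_nonneg (hF0 x) α₁) hcdf₁
  have hcdfU₃ := cdf_map_eq_of_measure_le hU₃ (fun x ↦ rpow_nonneg (hF0 x) α₃) hcdf₃
  have := Measure.isProbabilityMeasure_map (μ := P) hU₁.aemeasurable
  have := Measure.isProbabilityMeasure_map (μ := P) hU₃.aemeasurable
  have := nullSingletonClass_of_continuous_cdf (μ := P.map U₃)
    (hcdfU₃ ▸ hFc.rpow_const fun _ ↦ Or.inr hα₃.le)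
  have hU₃_Iio (x : ℝ) :
      P.map U₃ (Iio x) = ENNReal.ofReal (cdf (P.map U₁) x ^ (α₃ / α₁)) := by
    rw [measure_congr Iio_ae_eq_Iic, ← ofReal_cdf, hcdfU₃, hcdfU₁, ← rpow_mul (hF0 x),
      mul_div_cancel₀ _ hα₁.ne']
  rw [hindep.measure_lt_eq_lintegral hU₁ hU₃, lintegral_congr hU₃_Iio,
    lintegral_ofReal_cdf_rpow (hcdfU₁ ▸ hFc.rpow_const fun _ ↦ Or.inr hα₁.le)
      (by linarith [div_pos hα₃ hα₁])]
  congr 1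
  field_simp
  ring
end
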